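/- arXiv:1802.09798 — 5 statements merged into one kernel-verified Lean document; each statement's English description precedes it below -/
import Mathlib

section
/- Let F be a field of characteristic zero and f = a/b ∈ F(z) with a, b ∈ F[z], gcd(a,b) = 1, and b squarefree. Then f is D_z-integrable in F(z) (i.e., f = D_z(g) for some g ∈ F(z)) if and only if for every irreducible monic factor d of b, the residue of f at d (the numerator of the term with denominator d in the partial fraction decomposition) is zero. -/
/-!
Both sides are equivalent to `b` being a unit. Write `g = p / q` in lowest terms, so that
`D g = wronskian q p / q ^ 2`. If an irreducible `d` divides `q` exactly `m + 1` times, then,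
since `d` is separable in characteristic zero, it divides `wronskian q p = q p' - q' p` exactly
`m` times; so `d ^ (m + 2)` divides the reduced denominator of `D g`, which therefore is never
squarefree unless it is a unit. On the other side, the residue of `a / (d t)` at `d` is
`r ≡ a t⁻¹ (mod d)`, which vanishes only if `d ∣ a`, impossible for coprime `a` and `b`.
Finally, if `b` is a unit then `f` is a polynomial, and polynomials have antiderivatives in
characteristic zero.
-/

open Polynomial

namespace Polynomial

variable {F : Type*} [Field F]

theorem exists_derivative_eq [CharZero F] (p : F[X]) : ∃ P : F[X], derivative P = p := by
  induction p using Polynomial.induction_on' with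
  | add p q hp hq =>
    obtain ⟨P, rfl⟩ := hp
    obtain ⟨Q, rfl⟩ := hq
    exact ⟨P + Q, derivative_add⟩
  | monomial n c =>
    refine ⟨monomial (n + 1) (c / (n + 1)), ?_⟩
    rw [derivative_monomial, Nat.add_sub_cancel, Nat.cast_add_one,
      div_mul_cancel₀ _ (Nat.cast_add_one_ne_zero n)]

theorem exists_wronskian_eq_pow_mul_of_not_dvd [CharZero F] {d s p : F[X]} (hd : Irreducible d)
    (hs : ¬ d ∣ s) (hp : ¬ d ∣ p) (m : ℕ) :
    ∃ M, wronskian (d ^ (m + 1) * s) p = d ^ m * M ∧ ¬ d ∣ M := by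
  refine ⟨d * (s * derivative p - derivative s * p) - C ((m : F) + 1) * derivative d * s * p,
    ?_, ?_⟩
  · simp only [wronskian, derivative_mul, derivative_pow]
    push_cast
    ring
  · rw [dvd_sub_right (dvd_mul_right d _)]
    have hm : ¬ d ∣ C ((m : F) + 1) :=
      hd.not_dvd_isUnit (isUnit_C.mpr (Nat.cast_add_one_ne_zero m).isUnit)
    have hd' : ¬ d ∣ derivative d := fun h =>
      hd.not_isUnit (hd.separable.isUnit_of_dvd' dvd_rfl h)
    exact hd.prime.not_dvd_mul (hd.prime.not_dvd_mul (hd.prime.not_dvd_mul hm hd') hs) hp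

theorem isUnit_of_mul_sq_eq_mul_wronskian [CharZero F] {a b p q : F[X]} (hab : IsCoprime a b)
    (hb : Squarefree b) (hpq : IsCoprime p q) (hq : q ≠ 0)
    (h : a * q ^ 2 = b * wronskian q p) : IsUnit b := by
  by_contra hbu
  obtain ⟨d, hd, t, rfl⟩ := WfDvdMonoid.exists_irreducible_factor hbu hb.ne_zero
  have hdt : ¬ d ∣ t := hd.isRelPrime_iff_not_dvd.mp (IsRelPrime.of_squarefree_mul hb)
  have hda : ¬ d ∣ a := fun hda => hd.not_isUnit (hab.isUnit_of_dvd' hda (dvd_mul_right d t))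
  have hdq : d ∣ q := by
    refine hd.prime.dvd_of_dvd_pow (n := 2) ((hd.prime.dvd_mul.mp ?_).resolve_left hda)
    rw [h, mul_assoc]
    exact dvd_mul_right _ _
  have hdp : ¬ d ∣ p := fun hdp => hd.not_isUnit (hpq.isUnit_of_dvd' hdp hdq)
  obtain ⟨n, s, hds, rfl⟩ := WfDvdMonoid.max_power_factor hq hd
  obtain ⟨m, rfl⟩ : ∃ m, n = m + 1 :=
    Nat.exists_eq_add_one_of_ne_zero (by rintro rfl; exact hds (by simpa using hdq))
  obtain ⟨M, hW, hdM⟩ := exists_wronskian_eq_pow_mul_of_not_dvd hd hds hdp m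
  -- after cancelling `d ^ (m + 1)`, a factor `d` is left on the side of `a` but not of `t * M`
  have hcancel : a * d ^ (m + 1) * s ^ 2 = t * M := by
    refine mul_left_cancel₀ (pow_ne_zero (m + 1) hd.ne_zero) ?_
    rw [hW] at h
    linear_combination h
  refine hd.prime.not_dvd_mul hdt hdM (hcancel ▸ ?_)
  exact dvd_mul_of_dvd_left (dvd_mul_of_dvd_right (dvd_pow_self d m.succ_ne_zero) a) _

theorem exists_degree_lt_dvd_mul_sub {R : Type*} [CommRing R] [Nontrivial R] {d t : R[X]}
    (hd : d.Monic) (hdt : IsCoprime d t) (a : R[X]) :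
    ∃ r : R[X], r.degree < d.degree ∧ d ∣ r * t - a := by
  obtain ⟨u, v, huv⟩ := hdt
  refine ⟨(v * a) %ₘ d, degree_modByMonic_lt _ hd, ?_⟩
  rw [modByMonic_eq_sub_mul_div]
  exact ⟨-(a * u + (v * a /ₘ d) * t), by linear_combination a * huv⟩

theorem isUnit_of_forall_residue_eq_zero {a b : F[X]} (hab : IsCoprime a b) (hb : Squarefree b)
    (h : ∀ d : F[X], d.Monic → Irreducible d → d ∣ b →
      ∀ r : F[X], r.degree < d.degree → d ∣ r * (b / d) - a → r = 0) : IsUnit b := by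
  by_contra hbu
  obtain ⟨d, hdm, hd, t, rfl⟩ := exists_monic_irreducible_factor b hbu
  have hdt : IsCoprime d t := (IsRelPrime.of_squarefree_mul hb).isCoprime
  obtain ⟨r, hr, hdr⟩ := exists_degree_lt_dvd_mul_sub hdm hdt a
  have hr0 : r = 0 :=
    h d hdm hd (dvd_mul_right d t) r hr (by rwa [mul_div_cancel_left₀ t hd.ne_zero])
  rw [hr0, zero_mul, zero_sub, dvd_neg] at hdr
  exact hd.not_isUnit (hab.isUnit_of_dvd' hdr (dvd_mul_right d t))

end Polynomial

namespace RatFunc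

variable {F : Type*} [Field F]

theorem derivation_algebraMap (D : Derivation F (RatFunc F) (RatFunc F)) (p : F[X]) :
    D (algebraMap F[X] (RatFunc F) p) = algebraMap F[X] (RatFunc F) (derivative p) * D X := by
  rw [← aeval_X_left_eq_algebraMap, ← aeval_X_left_eq_algebraMap, D.map_aeval, smul_eq_mul]

theorem derivation_div_algebraMap {D : Derivation F (RatFunc F) (RatFunc F)} (hD : D X = 1)
    (p q : F[X]) :
    D (algebraMap F[X] (RatFunc F) p / algebraMap F[X] (RatFunc F) q) =
      algebraMap F[X] (RatFunc F) (wronskian q p) / algebraMap F[X] (RatFunc F) (q ^ 2) := by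
  rw [D.leibniz_div, derivation_algebraMap, derivation_algebraMap, hD]
  simp only [wronskian, map_sub, map_mul, map_pow, smul_eq_mul]
  ring

theorem exists_derivation_eq_algebraMap [CharZero F] {D : Derivation F (RatFunc F) (RatFunc F)}
    (hD : D X = 1) (p : F[X]) : ∃ g, D g = algebraMap F[X] (RatFunc F) p := by
  obtain ⟨P, rfl⟩ := exists_derivative_eq p
  exact ⟨algebraMap F[X] (RatFunc F) P, by rw [derivation_algebraMap, hD, mul_one]⟩

theorem isUnit_of_div_eq_derivation [CharZero F] {D : Derivation F (RatFunc F) (RatFunc F)}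
    (hD : D X = 1) {a b : F[X]} (hab : IsCoprime a b) (hb : Squarefree b) (g : RatFunc F)
    (h : algebraMap F[X] (RatFunc F) a / algebraMap F[X] (RatFunc F) b = D g) : IsUnit b := by
  have hq2 : algebraMap F[X] (RatFunc F) (g.denom ^ 2) ≠ 0 :=
    algebraMap_ne_zero (pow_ne_zero 2 g.denom_ne_zero)
  rw [← num_div_denom g, derivation_div_algebraMap hD,
    div_eq_div_iff (algebraMap_ne_zero hb.ne_zero) hq2, ← map_mul, ← map_mul, mul_comm _ b] at h
  exact isUnit_of_mul_sq_eq_mul_wronskian hab hb g.isCoprime_num_denom g.denom_ne_zero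
    (algebraMap_injective F h)

end RatFunc

theorem residue_criterion_squarefree_general (F : Type) [Field F] [CharZero F]
    (D : Derivation F (RatFunc F) (RatFunc F)) (hD : D RatFunc.X = 1)
    (a b : Polynomial F) (hcop : IsCoprime a b) (hsf : Squarefree b)
    (f : RatFunc F)
    (hf : f = algebraMap (Polynomial F) (RatFunc F) a /
              algebraMap (Polynomial F) (RatFunc F) b) :
    (∃ g : RatFunc F, f = D g) ↔
      ∀ d : Polynomial F, d.Monic → Irreducible d → d ∣ b →
        ∀ r : Polynomial F, r.degree < d.degree → d ∣ (r * (b / d) - a) → r = 0 := by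
  subst hf
  constructor
  · rintro ⟨g, hg⟩ d - hd hdb
    exact absurd (isUnit_of_dvd_unit hdb (RatFunc.isUnit_of_div_eq_derivation hD hcop hsf g hg))
      hd.not_isUnit
  · intro h
    obtain ⟨u, rfl⟩ := isUnit_of_forall_residue_eq_zero hcop hsf h
    obtain ⟨g, hg⟩ := RatFunc.exists_derivation_eq_algebraMap hD (a * ↑u⁻¹)
    refine ⟨g, ?_⟩
    rw [hg, map_mul, map_units_inv, div_eq_mul_inv]

/-- Residue criterion for rational integrability with squarefree denominator:
`f = a/b` with `gcd(a,b)=1` and `b` squarefree is `D_z`-integrable in `F(z)` iff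
for each monic irreducible factor `d` of `b`, the residue of `f` at `d` (the unique
`r` with `deg r < deg d` and `r·(b/d) ≡ a (mod d)`) is zero. -/
theorem residue_criterion_squarefree (F : Type) [Field F] [CharZero F]
    (D : Derivation F (RatFunc F) (RatFunc F)) (hD : D RatFunc.X = 1)
    (a b : Polynomial F) (hb : b ≠ 0) (hcop : IsCoprime a b) (hsf : Squarefree b)
    (f : RatFunc F)
    (hf : f = algebraMap (Polynomial F) (RatFunc F) a /
              algebraMap (Polynomial F) (RatFunc F) b) :
    (∃ g : RatFunc F, f = D g) ↔
      ∀ d : Polynomial F, d.Monic → Irreducible d → d ∣ b →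
        ∀ r : Polynomial F, r.degree < d.degree → d ∣ (r * (b / d) - a) → r = 0 :=
  residue_criterion_squarefree_general F D hD a b hcop hsf f hf
end

section
/- Let F be an algebraically closed field of characteristic zero and f ∈ F(z). Then f is D_z-integrable in F(z) if and only if for every root α of the denominator of f, the residue of f at z - α (i.e., the coefficient of 1/(z-α) in the partial fraction decomposition of f) is zero. -/
/-!
Hermite reduction. If `(z - α) ^ (n + 2)` exactly divides the denominator of `f`, subtracting the
derivative of a suitable `c / (z - α) ^ (n + 1)` lowers the order of that pole without creating new
ones, so induction on the degree of the denominator reduces `f` to a polynomial, which has an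
antiderivative, unless `f` has a simple pole somewhere. The residue hypothesis rules simple poles
out, because a derivative `D g` never has one: if `(z - α) ^ j` exactly divides the denominator of
`g`, then `D g` has a pole of order `j + 1` at `α` when `j ≥ 1` and none when `j = 0`.
-/

open Polynomial
open scoped RatFunc

theorem Polynomial.exists_derivative_eq_s3 {F : Type*} [Field F] [CharZero F] (p : F[X]) :
    ∃ q : F[X], derivative q = p := by
  induction p using Polynomial.induction_on' with
  | add p q hp hq =>
    obtain ⟨P, rfl⟩ := hp
    obtain ⟨Q, rfl⟩ := hq
    exact ⟨P + Q, derivative_add⟩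
  | monomial n a =>
    refine ⟨monomial (n + 1) (a / (n + 1)), ?_⟩
    rw [derivative_monomial, Nat.add_sub_cancel, Nat.cast_add_one,
      div_mul_cancel₀ a (Nat.cast_add_one_ne_zero n)]

theorem Polynomial.X_sub_C_mul_derivative_X_sub_C_pow {R : Type*} [CommRing R] (c : R) (m : ℕ) :
    (X - C c) * derivative ((X - C c) ^ m) = C (m : R) * (X - C c) ^ m := by
  rcases m with _ | m
  · simp
  · rw [derivative_X_sub_C_pow, Nat.add_sub_cancel, pow_succ]
    ring

theorem Polynomial.IsRoot.eval_ne_zero_of_isCoprime {F : Type*} [Field F] {p q : F[X]} {α : F}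
    (hq : q.IsRoot α) (h : IsCoprime p q) : p.eval α ≠ 0 := by
  have := h.map (evalRingHom α)
  rwa [coe_evalRingHom, hq.eq_zero, isCoprime_zero_right, isUnit_iff_ne_zero] at this

theorem Polynomial.derivative_mul_sub_mul_derivative_mul_X_sub_C_ne {F : Type*} [Field F]
    [CharZero F] {p q A B : F[X]} {α : F} (hq : q ≠ 0) (hpq : q.IsRoot α → p.eval α ≠ 0)
    (hA : A.eval α ≠ 0) (hB : B.eval α ≠ 0) :
    (derivative p * q - p * derivative q) * ((X - C α) * B) ≠ A * q ^ 2 := by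
  intro h
  obtain ⟨d, hqd, hd⟩ := q.exists_eq_pow_rootMultiplicity_mul_and_not_dvd hq α
  set j := q.rootMultiplicity α
  rw [dvd_iff_isRoot, IsRoot.def] at hd
  have hcancel : (derivative p * d * (X - C α) - p * (C (j : F) * d + (X - C α) * derivative d))
      * B = A * (X - C α) ^ j * d ^ 2 := by
    apply mul_left_cancel₀ (pow_ne_zero j (X_sub_C_ne_zero α))
    rw [hqd, derivative_mul] at h
    linear_combination h + p * B * d * X_sub_C_mul_derivative_X_sub_C_pow α j
  have hα := congrArg (eval α) hcancel
  simp only [eval_mul, eval_sub, eval_add, eval_pow, eval_C, eval_X, sub_self, zero_mul,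
    add_zero] at hα
  -- At `α` this reads `-p(α) j d(α) B(α) = A(α) 0 ^ j d(α) ^ 2`: one side vanishes, the other not.
  rcases Nat.eq_zero_or_pos j with hj | hj
  · simp [hj, hA, hd] at hα
  · have hp := hpq ((rootMultiplicity_pos hq).mp hj)
    simp [hj.ne', hp, hd, hB] at hα

section Derivation

variable {F : Type*} [Field F] {D : Derivation F F⟮X⟯ F⟮X⟯}

theorem Derivation.map_algebraMap_polynomial (hD : D RatFunc.X = 1) (p : F[X]) :
    D (algebraMap F[X] F⟮X⟯ p) = algebraMap F[X] F⟮X⟯ (derivative p) := by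
  rw [← RatFunc.aeval_X_left_eq_algebraMap, Derivation.map_aeval, hD, smul_eq_mul, mul_one,
    RatFunc.aeval_X_left_eq_algebraMap]

theorem Derivation.map_algebraMap_div (hD : D RatFunc.X = 1) (p q : F[X]) :
    D (algebraMap F[X] F⟮X⟯ p / algebraMap F[X] F⟮X⟯ q) =
      algebraMap F[X] F⟮X⟯ (derivative p * q - p * derivative q) /
        algebraMap F[X] F⟮X⟯ (q ^ 2) := by
  rw [Derivation.leibniz_div, D.map_algebraMap_polynomial hD, D.map_algebraMap_polynomial hD]
  simp only [smul_eq_mul, map_sub, map_mul, map_pow]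
  ring

variable [CharZero F]

theorem Derivation.exists_eq_of_denom_eq_one (hD : D RatFunc.X = 1) {f : F⟮X⟯}
    (hf : f.denom = 1) : ∃ g, f = D g := by
  obtain ⟨q, hq⟩ := f.num.exists_derivative_eq_s3
  refine ⟨algebraMap F[X] F⟮X⟯ q, ?_⟩
  rw [D.map_algebraMap_polynomial hD, hq]
  nth_rw 1 [← f.num_div_denom]
  rw [hf, map_one, div_one]

theorem Derivation.add_ne_div_X_sub_C_mul (hD : D RatFunc.X = 1) (g : F⟮X⟯) {w : F⟮X⟯} {α : F}
    {a b : F[X]} (hw : ¬ w.denom.IsRoot α) (ha : a.eval α ≠ 0) (hb : b.eval α ≠ 0) :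
    D g + w ≠ algebraMap F[X] F⟮X⟯ a / algebraMap F[X] F⟮X⟯ ((X - C α) * b) := by
  intro h
  have hb0 : b ≠ 0 := ne_of_apply_ne (eval α) (by rwa [eval_zero])
  have hg : algebraMap F[X] F⟮X⟯ (g.denom ^ 2) ≠ 0 :=
    RatFunc.algebraMap_ne_zero (pow_ne_zero 2 g.denom_ne_zero)
  have hwd : algebraMap F[X] F⟮X⟯ w.denom ≠ 0 := RatFunc.algebraMap_ne_zero w.denom_ne_zero
  have hXb : algebraMap F[X] F⟮X⟯ ((X - C α) * b) ≠ 0 :=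
    RatFunc.algebraMap_ne_zero (mul_ne_zero (X_sub_C_ne_zero α) hb0)
  rw [← g.num_div_denom, ← w.num_div_denom, D.map_algebraMap_div hD, div_add_div _ _ hg hwd,
    div_eq_div_iff (mul_ne_zero hg hwd) hXb] at h
  refine derivative_mul_sub_mul_derivative_mul_X_sub_C_ne g.denom_ne_zero
    (fun hα => hα.eval_ne_zero_of_isCoprime g.isCoprime_num_denom)
    (α := α) (A := a * w.denom - (X - C α) * b * w.num) (B := b * w.denom) ?_ ?_ ?_
  · simpa using mul_ne_zero ha hw
  · simpa using mul_ne_zero hb hw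
  · apply RatFunc.algebraMap_injective F
    simp only [map_mul, map_sub, map_pow] at h ⊢
    linear_combination h

theorem Derivation.map_C_div_X_sub_C_pow (hD : D RatFunc.X = 1) (c α : F) (n : ℕ) :
    D (algebraMap F[X] F⟮X⟯ (C (-c / (n + 1))) / algebraMap F[X] F⟮X⟯ ((X - C α) ^ (n + 1))) =
      algebraMap F[X] F⟮X⟯ (C c) / algebraMap F[X] F⟮X⟯ ((X - C α) ^ (n + 2)) := by
  rw [D.map_algebraMap_div hD, div_eq_div_iff
    (RatFunc.algebraMap_ne_zero (pow_ne_zero 2 (pow_ne_zero _ (X_sub_C_ne_zero α))))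
    (RatFunc.algebraMap_ne_zero (pow_ne_zero _ (X_sub_C_ne_zero α))), ← map_mul, ← map_mul]
  congr 1
  have hc : C (-c / (n + 1)) * C ((n + 1 : ℕ) : F) = -C c := by
    rw [← C_mul, ← C_neg, Nat.cast_add_one, div_mul_cancel₀ _ (Nat.cast_add_one_ne_zero n)]
  rw [derivative_C, derivative_X_sub_C_pow, Nat.add_sub_cancel]
  linear_combination (-(X - C α) ^ (2 * n + 2)) * hc

theorem Derivation.exists_sub_eq_div_X_sub_C_pow_mul (hD : D RatFunc.X = 1) (a : F[X])
    {b : F[X]} {α : F} (hb : b.eval α ≠ 0) (n : ℕ) :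
    ∃ s : F⟮X⟯, ∃ a' : F[X],
      algebraMap F[X] F⟮X⟯ a / algebraMap F[X] F⟮X⟯ ((X - C α) ^ (n + 2) * b) - D s =
        algebraMap F[X] F⟮X⟯ a' / algebraMap F[X] F⟮X⟯ ((X - C α) ^ (n + 1) * b) := by
  -- `L` is the leading coefficient of the pole of order `n + 2` at `α`.
  set L := a.eval α / b.eval α
  obtain ⟨a', ha'⟩ : X - C α ∣ a - C L * b := by
    rw [dvd_iff_isRoot, IsRoot, eval_sub, eval_mul, eval_C, div_mul_cancel₀ _ hb, sub_self]
  have hb0 : b ≠ 0 := ne_of_apply_ne (eval α) (by rwa [eval_zero])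
  have hP (k : ℕ) : algebraMap F[X] F⟮X⟯ ((X - C α) ^ k) ≠ 0 :=
    RatFunc.algebraMap_ne_zero (pow_ne_zero k (X_sub_C_ne_zero α))
  have hPb (k : ℕ) : algebraMap F[X] F⟮X⟯ ((X - C α) ^ k * b) ≠ 0 := by
    rw [map_mul]
    exact mul_ne_zero (hP k) (RatFunc.algebraMap_ne_zero hb0)
  refine ⟨algebraMap F[X] F⟮X⟯ (C (-L / (n + 1))) / algebraMap F[X] F⟮X⟯ ((X - C α) ^ (n + 1)),
    a', ?_⟩
  rw [D.map_C_div_X_sub_C_pow hD L α n, div_sub_div _ _ (hPb _) (hP _),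
    div_eq_div_iff (mul_ne_zero (hPb _) (hP _)) (hPb _)]
  simp only [← map_mul, ← map_sub]
  congr 1
  linear_combination (X - C α) ^ (2 * n + 3) * b * ha'

theorem Derivation.exists_denom_sub_dvd_of_isRoot (hD : D RatFunc.X = 1) {f : F⟮X⟯} {α : F}
    (hα : f.denom.IsRoot α) (hres : ∃ g w : F⟮X⟯, f = D g + w ∧ ¬ w.denom.IsRoot α) :
    ∃ s, (f - D s).denom ∣ f.denom ∧ (f - D s).denom.natDegree < f.denom.natDegree := by
  obtain ⟨b, hfb, hb⟩ := f.denom.exists_eq_pow_rootMultiplicity_mul_and_not_dvd f.denom_ne_zero α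
  rw [dvd_iff_isRoot] at hb
  have hb0 : b ≠ 0 := ne_of_apply_ne (eval α) (by rwa [eval_zero])
  have hf : f = algebraMap F[X] F⟮X⟯ f.num /
      algebraMap F[X] F⟮X⟯ ((X - C α) ^ f.denom.rootMultiplicity α * b) := by
    rw [← hfb, f.num_div_denom]
  rcases hn : f.denom.rootMultiplicity α with _ | _ | n
  · exact absurd hn ((rootMultiplicity_pos f.denom_ne_zero).mpr hα).ne'
  · obtain ⟨g, w, hfgw, hw⟩ := hres
    rw [hn, zero_add, pow_one] at hf
    exact absurd (hfgw.symm.trans hf)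
      (D.add_ne_div_X_sub_C_mul hD g hw (hα.eval_ne_zero_of_isCoprime f.isCoprime_num_denom) hb)
  · rw [hn] at hf
    obtain ⟨s, a', hs⟩ := D.exists_sub_eq_div_X_sub_C_pow_mul hD f.num hb n
    have hq : (X - C α) ^ (n + 1) * b ≠ 0 := mul_ne_zero (pow_ne_zero _ (X_sub_C_ne_zero α)) hb0
    have hdvd : (f - D s).denom ∣ (X - C α) ^ (n + 1) * b :=
      (RatFunc.denom_dvd hq).mpr ⟨a', by rw [hf]; exact hs⟩
    refine ⟨s, hdvd.trans ?_, (natDegree_le_of_dvd hdvd hq).trans_lt ?_⟩ <;> rw [hfb, hn]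
    · exact mul_dvd_mul_right (pow_dvd_pow _ (Nat.le_succ _)) b
    · rw [natDegree_mul (pow_ne_zero _ (X_sub_C_ne_zero α)) hb0,
        natDegree_mul (pow_ne_zero _ (X_sub_C_ne_zero α)) hb0, natDegree_pow, natDegree_pow,
        natDegree_X_sub_C]
      omega

end Derivation

/-- Over an algebraically closed field `F` of characteristic zero, `f ∈ F(z)` is
`D_z`-integrable iff at every root `α` of its denominator the residue of `f` at `z-α`
vanishes; vanishing of the residue at `α` is expressed as: `f` differs from a derivative
by a rational function with no pole at `α`. -/
theorem residue_criterion_algClosed (F : Type) [Field F] [CharZero F] [IsAlgClosed F]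
    (D : Derivation F (RatFunc F) (RatFunc F)) (hD : D RatFunc.X = 1) (f : RatFunc F) :
    (∃ g : RatFunc F, f = D g) ↔
      ∀ α : F, (f.denom).IsRoot α →
        ∃ g w : RatFunc F, f = D g + w ∧ ¬ (w.denom).IsRoot α := by
  refine ⟨fun ⟨g, hg⟩ _ _ => ⟨g, 0, by rw [hg, add_zero], by simp⟩, fun H => ?_⟩
  induction hn : f.denom.natDegree using Nat.strong_induction_on generalizing f with
  | _ n ih =>
  by_cases hroot : ∃ α, f.denom.IsRoot α
  · obtain ⟨α, hα⟩ := hroot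
    obtain ⟨s, hdvd, hlt⟩ := D.exists_denom_sub_dvd_of_isRoot hD hα (H α hα)
    have H' : ∀ β, (f - D s).denom.IsRoot β →
        ∃ g w : RatFunc F, f - D s = D g + w ∧ ¬ w.denom.IsRoot β := by
      intro β hβ
      obtain ⟨g, w, hf, hw⟩ := H β (hβ.dvd hdvd)
      exact ⟨g - s, w, by rw [map_sub, hf]; ring, hw⟩
    obtain ⟨g, hg⟩ := ih _ (hn ▸ hlt) _ H' rfl
    exact ⟨g + s, by rw [map_add, ← hg, sub_add_cancel]⟩
  · refine D.exists_eq_of_denom_eq_one hD (f.monic_denom.degree_le_zero_iff_eq_one.mp ?_)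
    exact not_lt.mp fun h => hroot (IsAlgClosed.exists_root _ h.ne')
end

section
/- Let K be a field of characteristic zero and let σ_x, σ_y be the shift automorphisms of K(x,y) with σ_x(f)(x,y) = f(x+1,y) and σ_y(f)(x,y) = f(x,y+1). If f ∈ K(x,y) satisfies σ_x^m σ_y^n(f) = f for integers m, n not both zero, then f = g(n̄x - m̄y) for some univariate rational function g ∈ K(z), where n̄ = n/gcd(m,n) and m̄ = m/gcd(m,n). -/
/-!
Let `T = σx^m σy^n`, so that `T x = x + m`, `T y = y + n`, and `T` fixes `u = n̄x - m̄y`.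

If `m ≠ 0`, the `K(x)`-automorphism of `K(x)(y)` sending `y` to `u` conjugates `T` into the map
that shifts `x ↦ x + m` in the coefficients and fixes `y`. The reduced numerator and denominator
of a rational function fixed by this map have shift-invariant coefficients, and a shift-invariant
rational function in one variable is constant: its reduced numerator and denominator are
shift-invariant polynomials, which in characteristic zero take one value at infinitely many
points. So `f ∈ K(u)`.

If `m = 0`, then `T` fixes `K(x)` and shifts `y` by `n ≠ 0`; the same argument over `K(x)` gives
`f ∈ K(x) = K(n̄x)`.
-/

open Polynomial

universe u

namespace AlgEquiv

variable {R A : Type*} [CommSemiring R] [Ring A] [Algebra R A] (σ : A ≃ₐ[R] A) {a : A}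

theorem zpow_apply_eq_self (h : σ a = a) (k : ℤ) : (σ ^ k) a = a :=
  MulAction.mem_fixedBy_zpow (g := σ) h k

theorem zpow_apply_eq_add_intCast (h : σ a = a + 1) (k : ℤ) : (σ ^ k) a = a + k := by
  induction k using Int.induction_on with
  | zero => simp
  | succ i ih =>
    rw [zpow_add_one, mul_apply, h, map_add, ih, map_one, Int.cast_add, Int.cast_one, add_assoc]
  | pred i ih =>
    have hinv : σ⁻¹ a = a - 1 :=
      σ.symm_apply_eq.2 (by rw [map_sub, h, map_one, add_sub_cancel_right])
    rw [zpow_sub_one, mul_apply, hinv, map_sub, ih, map_one, Int.cast_sub, Int.cast_one,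
      add_sub_assoc]

end AlgEquiv

theorem Polynomial.eq_C_of_comp_X_add_C_eq {R : Type*} [CommRing R] [IsDomain R] [CharZero R]
    {c : R} (hc : c ≠ 0) {p : R[X]} (h : p.comp (X + C c) = p) : p = C (p.eval 0) := by
  have hper : Function.Periodic (fun t => p.eval t) c := fun t => by
    simpa using congrArg (eval t) h
  refine eq_of_infinite_eval_eq _ _ (Set.infinite_of_injective_forall_mem
    (f := fun k : ℕ => (k : R) * c) (fun i j hij => ?_) fun k => ?_)
  · exact_mod_cast mul_right_cancel₀ hc hij
  · simpa using hper.nat_mul_eq k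

theorem Transcendental.algebraMap_mul_add {K L : Type*} [Field K] [CommRing L] [Algebra K L]
    {v : L} (hv : Transcendental K v) {a : K} (ha : a ≠ 0) (b : K) :
    Transcendental K (algebraMap K L a * v + algebraMap K L b) := by
  have := hv.aeval (C a * X + C b) (by rw [natDegree_linear ha]; exact one_ne_zero)
    (by rw [leadingCoeff_linear ha]; exact mem_nonZeroDivisors_of_ne_zero ha)
  simpa [Algebra.smul_def] using this

namespace RatFunc

variable {K : Type u} [Field K]

theorem algHom_ext {L : Type*} [Semiring L] [Algebra K L] {φ ψ : RatFunc K →ₐ[K] L}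
    (h : φ X = ψ X) : φ = ψ :=
  AlgHom.coe_ringHom_injective <| IsLocalization.ringHom_ext (nonZeroDivisors K[X]) <|
    Polynomial.ringHom_ext (fun a => by simp [algebraMap_C, ← algebraMap_eq_C]) (by simpa using h)

theorem algHom_algebraMap_eq_aeval {L : Type*} [CommSemiring L] [Algebra K L]
    (ψ : RatFunc K →ₐ[K] L) (p : K[X]) : ψ (algebraMap K[X] _ p) = aeval (ψ X) p := by
  rw [aeval_algHom_apply, ← algebraMap_X, aeval_algebraMap_apply, aeval_X_left_apply]

theorem transcendental_algHom_X {L : Type*} [Field L] [Algebra K L] (ψ : RatFunc K →ₐ[K] L) :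
    Transcendental K (ψ X) :=
  transcendental_iff.2 fun p hp => by simpa [← algHom_algebraMap_eq_aeval] using hp

theorem algHom_apply_eq_eval {L : Type u} [Field L] [Algebra K L] (ψ : RatFunc K →ₐ[K] L)
    (g : RatFunc K) : ψ g = eval (algebraMap K L) (ψ X) g := by
  conv_lhs => rw [← num_div_denom g]
  rw [map_div₀, algHom_algebraMap_eq_aeval, algHom_algebraMap_eq_aeval, eval, aeval_def,
    aeval_def]

noncomputable def aevalOfTranscendental {L : Type*} [Field L] [Algebra K L] {v : L}
    (hv : Transcendental K v) : RatFunc K →ₐ[K] L :=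
  (IntermediateField.adjoin K {v}).val.comp (algEquivOfTranscendental v hv).toAlgHom

@[simp]
theorem aevalOfTranscendental_X {L : Type*} [Field L] [Algebra K L] {v : L}
    (hv : Transcendental K v) : aevalOfTranscendental hv X = v := by
  simp [aevalOfTranscendental]

theorem algHom_div_map_eq_eval {F : Type*} {L : Type u} [Field F] [Algebra K F] [Field L]
    [Algebra F L] [Algebra K L] [IsScalarTower K F L] (ψ : RatFunc F →ₐ[F] L) (p q : K[X]) :
    ψ (algebraMap F[X] _ (p.map (algebraMap K F)) / algebraMap F[X] _ (q.map (algebraMap K F))) =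
      eval (algebraMap K L) (ψ X) (algebraMap K[X] _ p / algebraMap K[X] _ q) := by
  have hψX := (transcendental_algHom_X ψ).of_tower_top K
  rw [← aevalOfTranscendental_X hψX, ← algHom_apply_eq_eval]
  simp only [map_div₀, algHom_algebraMap_eq_aeval, aeval_map_algebraMap, aevalOfTranscendental_X]

noncomputable def affineEquiv (a b : K) (ha : a ≠ 0) : RatFunc K ≃ₐ[K] RatFunc K :=
  have hinv : algebraMap K (RatFunc K) a⁻¹ * algebraMap K _ a = 1 := by
    rw [← map_mul, inv_mul_cancel₀ ha, map_one]
  AlgEquiv.ofAlgHom (aevalOfTranscendental (transcendental_X.algebraMap_mul_add ha b))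
    (aevalOfTranscendental (transcendental_X.algebraMap_mul_add (inv_ne_zero ha) (-(a⁻¹ * b))))
    (algHom_ext (by
      simp only [AlgHom.comp_apply, aevalOfTranscendental_X, map_add, map_mul, AlgHom.commutes,
        AlgHom.id_apply, map_neg]
      linear_combination X * hinv))
    (algHom_ext (by
      simp only [AlgHom.comp_apply, aevalOfTranscendental_X, map_add, map_mul, AlgHom.commutes,
        AlgHom.id_apply, map_neg]
      linear_combination (X - algebraMap K _ b) * hinv))

@[simp]
theorem affineEquiv_X (a b : K) (ha : a ≠ 0) :
    affineEquiv a b ha X = algebraMap K _ a * X + algebraMap K _ b := by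
  simp [affineEquiv]

section FixedPoints

variable {F : Type*} [Field F]

theorem map_algebraMap_eq_comp_map {φ : RatFunc F →+* RatFunc F} {s : F →+* F} {q : F[X]}
    (hC : ∀ a, φ (algebraMap F _ a) = algebraMap F _ (s a)) (hX : φ X = algebraMap F[X] _ q)
    (p : F[X]) : φ (algebraMap F[X] _ p) = algebraMap F[X] _ ((p.map s).comp q) :=
  RingHom.congr_fun (Polynomial.ringHom_ext (f := φ.comp (algebraMap F[X] _))
    (g := (algebraMap F[X] _).comp ((compRingHom q).comp (Polynomial.mapRingHom s)))
    (fun a => by simpa [algebraMap_C, ← algebraMap_eq_C] using hC a) (by simpa using hX)) p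

theorem map_num_eq_and_map_denom_eq {Ψ : F[X] →+* F[X]} (hΨ : ∀ p, p.Monic → (Ψ p).Monic)
    {φ : RatFunc F →+* RatFunc F}
    (hφ : ∀ p, φ (algebraMap F[X] _ p) = algebraMap F[X] _ (Ψ p))
    {f : RatFunc F} (hf : φ f = f) : Ψ f.num = f.num ∧ Ψ f.denom = f.denom := by
  have hmonic := hΨ _ f.monic_denom
  have hcross : f.num * Ψ f.denom = Ψ f.num * f.denom :=
    (num_mul_eq_mul_denom_iff hmonic.ne_zero).2 <| by
      rw [← hφ, ← hφ, ← map_div₀, num_div_denom, hf]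
  have hcop := f.isCoprime_num_denom
  have hden : Ψ f.denom = f.denom :=
    eq_of_monic_of_associated hmonic f.monic_denom <| associated_of_dvd_dvd
      ((hcop.map Ψ).symm.dvd_of_dvd_mul_left ⟨f.num, by linear_combination -hcross⟩)
      (hcop.symm.dvd_of_dvd_mul_left ⟨Ψ f.num, by linear_combination hcross⟩)
  refine ⟨mul_right_cancel₀ f.denom_ne_zero ?_, hden⟩
  rw [← hcross, hden]

theorem exists_eq_algebraMap_of_shift_fixed [CharZero F] {c : F} (hc : c ≠ 0)
    {φ : RatFunc F →+* RatFunc F} (hC : ∀ a, φ (algebraMap F _ a) = algebraMap F _ a)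
    (hX : φ X = X + algebraMap F _ c) {f : RatFunc F} (hf : φ f = f) :
    ∃ a, f = algebraMap F _ a := by
  have hφ (p : F[X]) :
      φ (algebraMap F[X] _ p) = algebraMap F[X] _ (p.comp (Polynomial.X + Polynomial.C c)) := by
    simpa using map_algebraMap_eq_comp_map (s := RingHom.id F)
      (q := Polynomial.X + Polynomial.C c) hC (by simp [hX, algebraMap_C, ← algebraMap_eq_C]) p
  obtain ⟨hnum, hden⟩ := map_num_eq_and_map_denom_eq
    (Ψ := compRingHom (Polynomial.X + Polynomial.C c)) (fun p hp => hp.comp_X_add_C c) hφ hf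
  obtain ⟨a, ha⟩ : ∃ a, f.num = Polynomial.C a := ⟨_, eq_C_of_comp_X_add_C_eq hc hnum⟩
  obtain ⟨b, hb⟩ : ∃ b, f.denom = Polynomial.C b := ⟨_, eq_C_of_comp_X_add_C_eq hc hden⟩
  refine ⟨a / b, ?_⟩
  rw [← num_div_denom f, ha, hb, algebraMap_C, algebraMap_C, ← algebraMap_eq_C, map_div₀]

theorem exists_eq_div_map_of_coeff_fixed {k : Type*} [Field k] [Algebra k F] {s : F →+* F}
    (hs : ∀ a, s a = a → a ∈ Set.range (algebraMap k F)) {φ : RatFunc F →+* RatFunc F}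
    (hC : ∀ a, φ (algebraMap F _ a) = algebraMap F _ (s a)) (hX : φ X = X)
    {f : RatFunc F} (hf : φ f = f) :
    ∃ p q : k[X], f = algebraMap F[X] _ (p.map (algebraMap k F)) /
      algebraMap F[X] _ (q.map (algebraMap k F)) := by
  have hφ (p : F[X]) : φ (algebraMap F[X] _ p) = algebraMap F[X] _ (p.map s) := by
    simpa using map_algebraMap_eq_comp_map (q := Polynomial.X) hC (by simp [hX]) p
  obtain ⟨hnum, hden⟩ := map_num_eq_and_map_denom_eq (Ψ := Polynomial.mapRingHom s)
    (fun p hp => hp.map s) hφ hf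
  have hlift (p : F[X]) (hp : p.map s = p) : ∃ p₀ : k[X], p₀.map (algebraMap k F) = p :=
    (mem_lifts p).1 ((lifts_iff_coeff_lifts p).2 fun i => hs _ (by rw [← coeff_map, hp]))
  obtain ⟨p, hp⟩ := hlift _ hnum
  obtain ⟨q, hq⟩ := hlift _ hden
  exact ⟨p, q, by rw [hp, hq, num_div_denom]⟩

end FixedPoints

end RatFunc

-- Stated outside `namespace RatFunc`, whose scoped instance `RatFunc.liftAlgebra` is a second
-- `Algebra (RatFunc K) (RatFunc (RatFunc K))`.

theorem apply_algebraMap_eq_of_apply_algebraMap_X {K L : Type*} [Field K] [Semiring L]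
    [Algebra (RatFunc K) L] [Algebra K L] [IsScalarTower K (RatFunc K) L] {T : L →ₐ[K] L}
    {s : RatFunc K →ₐ[K] RatFunc K}
    (h : T (algebraMap (RatFunc K) L RatFunc.X) = algebraMap (RatFunc K) L (s RatFunc.X))
    (a : RatFunc K) : T (algebraMap _ L a) = algebraMap _ L (s a) :=
  DFunLike.congr_fun (RatFunc.algHom_ext (φ := T.comp (IsScalarTower.toAlgHom K _ L))
    (ψ := (IsScalarTower.toAlgHom K _ L).comp s) h) a

section Bivariate

variable {K : Type u} [Field K] [CharZero K]

theorem exists_eq_eval_of_shift_algebraMap_X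
    {T : RatFunc (RatFunc K) →ₐ[K] RatFunc (RatFunc K)} {c : K} (hc : c ≠ 0)
    (hTx : T (algebraMap (RatFunc K) _ RatFunc.X) =
      algebraMap (RatFunc K) _ RatFunc.X + algebraMap K _ c)
    {a b : RatFunc K} (ha : a ≠ 0)
    (hTu : T (algebraMap (RatFunc K) _ a * RatFunc.X + algebraMap _ _ b) =
      algebraMap (RatFunc K) _ a * RatFunc.X + algebraMap _ _ b)
    {f : RatFunc (RatFunc K)} (hf : T f = f) :
    ∃ g : RatFunc K, f = RatFunc.eval (algebraMap K _)
      (algebraMap (RatFunc K) _ a * RatFunc.X + algebraMap _ _ b) g := by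
  let E := RatFunc.affineEquiv a b ha
  let s := RatFunc.affineEquiv (1 : K) c one_ne_zero
  have hsX : s RatFunc.X = RatFunc.X + algebraMap K _ c := by
    rw [RatFunc.affineEquiv_X, map_one, one_mul]
  have hTs : ∀ r, T (algebraMap _ _ r) = algebraMap _ _ (s r) :=
    apply_algebraMap_eq_of_apply_algebraMap_X (T := T) (s := s) (by
      rw [hTx, AlgEquiv.coe_toAlgHom, hsX, map_add, ← IsScalarTower.algebraMap_apply])
  have hs (r : RatFunc K) (hr : s r = r) : r ∈ Set.range (algebraMap K _) := by
    obtain ⟨k, hk⟩ := RatFunc.exists_eq_algebraMap_of_shift_fixed hc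
      (φ := (s : RatFunc K →+* RatFunc K)) s.commutes hsX hr
    exact ⟨k, hk.symm⟩
  let φ : RatFunc (RatFunc K) →+* RatFunc (RatFunc K) :=
    (E.symm : RatFunc (RatFunc K) →+* RatFunc (RatFunc K)).comp
      ((T : RatFunc (RatFunc K) →+* RatFunc (RatFunc K)).comp
        (E : RatFunc (RatFunc K) →+* RatFunc (RatFunc K)))
  have hφC (r : RatFunc K) : φ (algebraMap _ _ r) = algebraMap _ _ (s r) := by
    show E.symm (T (E _)) = _
    rw [E.commutes, hTs, E.symm.commutes]
  have hφX : φ RatFunc.X = RatFunc.X := by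
    show E.symm (T (E RatFunc.X)) = RatFunc.X
    rw [RatFunc.affineEquiv_X, hTu, ← RatFunc.affineEquiv_X a b ha, E.symm_apply_apply]
  obtain ⟨p, q, hpq⟩ := RatFunc.exists_eq_div_map_of_coeff_fixed
    (s := (s : RatFunc K →+* RatFunc K)) hs hφC hφX (f := E.symm f)
    (by show E.symm (T (E (E.symm f))) = _; rw [E.apply_symm_apply, hf])
  refine ⟨algebraMap _ _ p / algebraMap _ _ q, ?_⟩
  rw [← E.apply_symm_apply f, hpq, ← AlgEquiv.coe_toAlgHom, RatFunc.algHom_div_map_eq_eval,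
    AlgEquiv.coe_toAlgHom, RatFunc.affineEquiv_X]

theorem exists_eq_eval_of_shift_X {T : RatFunc (RatFunc K) →ₐ[K] RatFunc (RatFunc K)}
    (hTx : T (algebraMap (RatFunc K) _ RatFunc.X) = algebraMap (RatFunc K) _ RatFunc.X)
    {c : RatFunc K} (hc : c ≠ 0) (hTy : T RatFunc.X = RatFunc.X + algebraMap _ _ c)
    {a : K} (ha : a ≠ 0) {f : RatFunc (RatFunc K)} (hf : T f = f) :
    ∃ g : RatFunc K, f = RatFunc.eval (algebraMap K _)
      (algebraMap K _ a * algebraMap (RatFunc K) _ RatFunc.X) g := by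
  have hTC : ∀ r, T (algebraMap _ _ r) = algebraMap _ _ r :=
    apply_algebraMap_eq_of_apply_algebraMap_X (T := T) (s := AlgHom.id K _) hTx
  obtain ⟨r, rfl⟩ :=
    RatFunc.exists_eq_algebraMap_of_shift_fixed hc (φ := (T : _ →+* _)) hTC hTy hf
  let E := RatFunc.affineEquiv a 0 ha
  let ψ := (IsScalarTower.toAlgHom K (RatFunc K) (RatFunc (RatFunc K))).comp E.toAlgHom
  have hψ : ψ RatFunc.X = algebraMap K _ a * algebraMap (RatFunc K) _ RatFunc.X := by
    simp [ψ, E, IsScalarTower.algebraMap_apply K (RatFunc K) (RatFunc (RatFunc K))]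
  refine ⟨E.symm r, ?_⟩
  rw [← hψ, ← RatFunc.algHom_apply_eq_eval]
  simp [ψ]

theorem exists_eq_eval_of_shift {T : RatFunc (RatFunc K) →ₐ[K] RatFunc (RatFunc K)} {m n : ℤ}
    (hmn : ¬(m = 0 ∧ n = 0))
    (hTx : T (algebraMap (RatFunc K) _ RatFunc.X) = algebraMap (RatFunc K) _ RatFunc.X + m)
    (hTy : T RatFunc.X = (RatFunc.X : RatFunc (RatFunc K)) + n) {p q : ℤ}
    (hpq : ¬(p = 0 ∧ q = 0)) (hcross : p * m = q * n) {f : RatFunc (RatFunc K)} (hf : T f = f) :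
    ∃ g : RatFunc K, f = RatFunc.eval (algebraMap K _) ((p : RatFunc (RatFunc K)) *
      algebraMap (RatFunc K) _ RatFunc.X - (q : RatFunc (RatFunc K)) * RatFunc.X) g := by
  rcases eq_or_ne q 0 with rfl | hq
  · have hp : p ≠ 0 := fun hp => hpq ⟨hp, rfl⟩
    have hm : m = 0 := by simpa [hp] using hcross
    have hn : n ≠ 0 := fun hn => hmn ⟨hm, hn⟩
    obtain ⟨g, hg⟩ := exists_eq_eval_of_shift_X (T := T)
      (hTx.trans (by rw [hm, Int.cast_zero, add_zero])) (c := (n : RatFunc K))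
      (by exact_mod_cast hn) (hTy.trans (by rw [map_intCast])) (a := (p : K))
      (by exact_mod_cast hp) hf
    exact ⟨g, by rw [hg]; simp⟩
  · have hm : m ≠ 0 := by rintro rfl; exact hmn ⟨rfl, by simpa [hq] using hcross.symm⟩
    have hu : algebraMap (RatFunc K) (RatFunc (RatFunc K)) (-q) * RatFunc.X +
        algebraMap (RatFunc K) _ ((p : RatFunc K) * RatFunc.X) =
        (p : RatFunc (RatFunc K)) * algebraMap (RatFunc K) _ RatFunc.X -
          (q : RatFunc (RatFunc K)) * RatFunc.X := by
      simp only [map_neg, map_intCast, map_mul]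
      ring
    obtain ⟨g, hg⟩ := exists_eq_eval_of_shift_algebraMap_X (T := T) (c := (m : K))
      (by exact_mod_cast hm) (hTx.trans (by rw [map_intCast])) (a := -(q : RatFunc K))
      (b := (p : RatFunc K) * RatFunc.X) (by simpa using hq) (by
        rw [hu, map_sub, map_mul, map_mul, map_intCast, map_intCast, hTx, hTy]
        linear_combination (by exact_mod_cast hcross : (p : RatFunc (RatFunc K)) * m = q * n)) hf
    exact ⟨g, by rwa [hu] at hg⟩

end Bivariate

/-- Shift invariant rational functions: if `σ_x^m σ_y^n(f) = f` with `m, n` not both zero,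
then `f = g(n̄x - m̄y)` for some univariate rational function `g`, where
`n̄ = n/gcd(m,n)`, `m̄ = m/gcd(m,n)`. -/
theorem shift_invariant_structure (K : Type) [Field K] [CharZero K]
    (x y : RatFunc (RatFunc K))
    (hx : x = algebraMap (RatFunc K) (RatFunc (RatFunc K)) RatFunc.X) (hy : y = RatFunc.X)
    (σx σy : RatFunc (RatFunc K) ≃ₐ[K] RatFunc (RatFunc K))
    (hσx : σx x = x + 1 ∧ σx y = y)
    (hσy : σy x = x ∧ σy y = y + 1)
    (m n : ℤ) (hmn : ¬(m = 0 ∧ n = 0))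
    (f : RatFunc (RatFunc K)) (hf : (σx ^ m) ((σy ^ n) f) = f) :
    ∃ g : RatFunc K,
      f = RatFunc.eval (algebraMap K (RatFunc (RatFunc K)))
        (((n / (Int.gcd m n : ℤ) : ℤ) : RatFunc (RatFunc K)) * x -
         ((m / (Int.gcd m n : ℤ) : ℤ) : RatFunc (RatFunc K)) * y) g := by
  obtain ⟨hσx₁, hσx₂⟩ := hσx
  obtain ⟨hσy₁, hσy₂⟩ := hσy
  have hTx : (σx ^ m * σy ^ n) x = x + m := by
    rw [AlgEquiv.mul_apply, σy.zpow_apply_eq_self hσy₁, σx.zpow_apply_eq_add_intCast hσx₁]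
  have hTy : (σx ^ m * σy ^ n) y = y + n := by
    rw [AlgEquiv.mul_apply, σy.zpow_apply_eq_add_intCast hσy₂, map_add,
      σx.zpow_apply_eq_self hσx₂, map_intCast]
  have hg : (Int.gcd m n : ℤ) ≠ 0 := by exact_mod_cast mt Int.gcd_eq_zero_iff.1 hmn
  obtain ⟨m', hm⟩ := Int.gcd_dvd_left m n
  obtain ⟨n', hn⟩ := Int.gcd_dvd_right m n
  rw [Int.ediv_eq_of_eq_mul_right hg hm, Int.ediv_eq_of_eq_mul_right hg hn]
  subst hx hy
  exact exists_eq_eval_of_shift (T := σx ^ m * σy ^ n) hmn hTx hTy (p := n') (q := m')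
    (fun h => hmn ⟨by rw [hm, h.2, mul_zero], by rw [hn, h.1, mul_zero]⟩)
    (by linear_combination n' * hm - m' * hn) hf
end

section
/- Let K be a field of characteristic zero, q ∈ K not a root of unity, σ_x the shift x ↦ x+1 and τ_y the q-shift y ↦ qy on K(x,y). Suppose f ∈ K(x,y) satisfies σ_x^m τ_y^n(f) = f for integers m, n not both zero. Then: if m = 0 then f ∈ K(x); if n = 0 then f ∈ K(y); and if mn ≠ 0 then f ∈ K. -/
/-!
Put `φ = σ_x^m τ_y^n`. It acts on `K(x)` as the shift `x ↦ x + m` and sends `y` to `q^n y`, so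
on `K(x)[y]` it shifts every coefficient and multiplies the coefficient of `y^i` by `q^(ni)`;
in particular it does not raise `y`-degrees. Writing `f = p / r` in lowest terms with `r` monic
of degree `d`, invariance of `f` therefore forces `φ p = q^(nd) p` and `φ r = q^(nd) r`.
If `n = 0`, every coefficient is fixed by a nontrivial shift, hence lies in `K`, and `f ∈ K(y)`.
If `n ≠ 0`, a nonzero coefficient `a` of `y^i` satisfies `a(x + m) = q^(n(d-i)) a(x)`; comparing
leading coefficients gives `q^(n(d-i)) = 1`, so `i = d`, whence `f ∈ K(x)`, and `f ∈ K` if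
moreover `m ≠ 0`.
-/

open Polynomial

namespace Polynomial

variable {F : Type*} [Field F]

theorem exists_C_mul_eq_of_mul_eq_mul {p r P R : F[X]} (hpr : IsCoprime p r) (hr : r ≠ 0)
    (hR : R.natDegree ≤ r.natDegree) (h : P * r = p * R) :
    ∃ v : F, P = C v * p ∧ R = C v * r := by
  obtain ⟨u, rfl⟩ : r ∣ R := hpr.symm.dvd_of_dvd_mul_left ⟨P, by rw [← h, mul_comm]⟩
  have hu : u.natDegree = 0 := by
    rcases eq_or_ne u 0 with rfl | hu
    · rfl
    · rw [natDegree_mul hr hu] at hR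
      omega
  rw [eq_C_of_natDegree_eq_zero hu] at h ⊢
  exact ⟨u.coeff 0, mul_right_cancel₀ hr (by rw [h]; ring), mul_comm _ _⟩

theorem eq_C_of_taylor_eq_self [CharZero F] {r : F} (hr : r ≠ 0) {p : F[X]}
    (h : taylor r p = p) : p = C (p.eval 0) := by
  have hperiodic : Function.Periodic (fun s => p.eval s) r := fun s => by
    simp only [← taylor_eval, h]
  refine eq_of_infinite_eval_eq _ _ (Set.infinite_of_injective_forall_mem
    (f := fun k : ℕ => (k : F) * r) (fun i j hij => ?_) fun k => ?_)
  · exact Nat.cast_injective (mul_right_cancel₀ hr hij)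
  · simpa using hperiodic.nat_mul_eq k

end Polynomial

namespace RatFunc

section Lift

variable {F : Type*} [Field F] {G : Type*} [FunLike G (RatFunc F) (RatFunc F)]
  [RingHomClass G (RatFunc F) (RatFunc F)] {Φ : G} {T : F[X] → F[X]}

theorem map_eq_div_of_map_algebraMap
    (hT : ∀ p, Φ (algebraMap F[X] (RatFunc F) p) = algebraMap F[X] (RatFunc F) (T p))
    (f : RatFunc F) :
    Φ f = algebraMap F[X] (RatFunc F) (T f.num) / algebraMap F[X] (RatFunc F) (T f.denom) := by
  conv_lhs => rw [← f.num_div_denom]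
  rw [map_div₀, hT, hT]

theorem map_num_mul_denom_mul_C
    (hT : ∀ p, Φ (algebraMap F[X] (RatFunc F) p) = algebraMap F[X] (RatFunc F) (T p))
    {f : RatFunc F} {e₁ e₂ : F} (h : Φ f * RatFunc.C e₁ = RatFunc.C e₂ * f) :
    T f.num * f.denom * Polynomial.C e₁ = Polynomial.C e₂ * f.num * T f.denom := by
  have hTd : algebraMap F[X] (RatFunc F) (T f.denom) ≠ 0 := by
    rw [← hT]
    exact (map_ne_zero Φ).2 (algebraMap_ne_zero f.denom_ne_zero)
  have hd : algebraMap F[X] (RatFunc F) f.denom ≠ 0 := algebraMap_ne_zero f.denom_ne_zero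
  rw [map_eq_div_of_map_algebraMap hT] at h
  conv_rhs at h => rw [← f.num_div_denom]
  rw [← algebraMap_C, ← algebraMap_C] at h
  apply algebraMap_injective F
  simp only [map_mul]
  field_simp at h
  linear_combination h

theorem exists_map_num_denom_eq_C_mul
    (hT : ∀ p, Φ (algebraMap F[X] (RatFunc F) p) = algebraMap F[X] (RatFunc F) (T p))
    (hdeg : ∀ p, (T p).natDegree ≤ p.natDegree) {f : RatFunc F} (hf : Φ f = f) :
    ∃ v : F, T f.num = Polynomial.C v * f.num ∧ T f.denom = Polynomial.C v * f.denom := by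
  have h := map_num_mul_denom_mul_C hT (e₁ := 1) (e₂ := 1) (by simpa using hf)
  simp only [map_one, mul_one, one_mul] at h
  exact exists_C_mul_eq_of_mul_eq_mul f.isCoprime_num_denom f.denom_ne_zero (hdeg _) h

end Lift

section AlgHom

variable {K L : Type*} [Field K] [Field L] [Algebra K L]

theorem algHom_apply_eq_aeval_div (g : RatFunc K →ₐ[K] L) (a : RatFunc K) :
    g a = aeval (g X) a.num / aeval (g X) a.denom := by
  conv_lhs => rw [← a.num_div_denom]
  rw [map_div₀, ← aeval_X_left_eq_algebraMap, ← aeval_X_left_eq_algebraMap, aeval_algHom_apply,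
    aeval_algHom_apply]

theorem algHom_ext_of_apply_X {g₁ g₂ : RatFunc K →ₐ[K] L} (h : g₁ X = g₂ X) : g₁ = g₂ :=
  AlgHom.ext fun a => by rw [algHom_apply_eq_aeval_div g₁ a, algHom_apply_eq_aeval_div g₂ a, h]

theorem algHom_apply_mem_adjoin (g : RatFunc K →ₐ[K] L) (a : RatFunc K) :
    g a ∈ IntermediateField.adjoin K {g X} :=
  (IntermediateField.mem_adjoin_simple_iff _ _).2 ⟨_, _, algHom_apply_eq_aeval_div g a⟩

end AlgHom

section Shift

variable {K : Type*} [Field K]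

noncomputable def shift (r : K) : RatFunc K →ₐ[K] RatFunc K :=
  mapAlgHom (taylorAlgHom r)
    (nonZeroDivisors_le_comap_nonZeroDivisors_of_injective _ (taylor_injective r))

theorem shift_algebraMap (r : K) (p : K[X]) :
    shift r (algebraMap K[X] (RatFunc K) p) = algebraMap K[X] (RatFunc K) (taylor r p) := by
  simpa [shift, coe_mapAlgHom_eq_coe_map] using map_apply_div (taylorAlgHom r) _ p 1

theorem shift_X (r : K) : shift r X = X + C r := by
  rw [← algebraMap_X, shift_algebraMap, taylor_X, map_add, algebraMap_X, algebraMap_C]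

theorem eq_of_shift_mul_C_eq_C_mul {r e₁ e₂ : K} {a : RatFunc K} (ha : a ≠ 0)
    (h : shift r a * C e₁ = C e₂ * a) : e₁ = e₂ := by
  have h' := congrArg leadingCoeff (map_num_mul_denom_mul_C (shift_algebraMap r) h)
  simp only [leadingCoeff_mul, leadingCoeff_taylor, a.monic_denom.leadingCoeff, mul_one,
    leadingCoeff_C] at h'
  exact mul_left_cancel₀ (leadingCoeff_ne_zero.2 (num_ne_zero ha)) (h'.trans (mul_comm _ _))

theorem exists_eq_C_of_shift_eq_self [CharZero K] {r : K} (hr : r ≠ 0) {a : RatFunc K}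
    (h : shift r a = a) : ∃ k : K, a = C k := by
  obtain ⟨v, hnum, hdenom⟩ := exists_map_num_denom_eq_C_mul (shift_algebraMap r)
    (fun p => (natDegree_taylor p r).le) h
  have hv : 1 = v := by
    simpa [leadingCoeff_taylor, a.monic_denom.leadingCoeff] using congrArg leadingCoeff hdenom
  rw [← hv, map_one, one_mul] at hnum hdenom
  obtain ⟨k₁, hk₁⟩ : ∃ k, a.num = Polynomial.C k := ⟨_, eq_C_of_taylor_eq_self hr hnum⟩
  obtain ⟨k₂, hk₂⟩ : ∃ k, a.denom = Polynomial.C k := ⟨_, eq_C_of_taylor_eq_self hr hdenom⟩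
  refine ⟨k₁ / k₂, ?_⟩
  rw [← a.num_div_denom, hk₁, hk₂, algebraMap_C, algebraMap_C, map_div₀]

end Shift

end RatFunc

namespace AlgEquiv

variable {K E : Type*} [Field K] [CommRing E] [Algebra K E] {ψ : E ≃ₐ[K] E} {a : E}

theorem zpow_apply_of_apply_eq_add_one (h : ψ a = a + 1) (k : ℤ) :
    (ψ ^ k) a = a + k := by
  have hinv : ψ⁻¹ a = a - 1 := by
    rw [AlgEquiv.aut_inv, AlgEquiv.symm_apply_eq, map_sub, h, map_one, add_sub_cancel_right]
  induction k using Int.induction_on with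
  | zero => simp
  | succ k ih =>
    rw [zpow_add_one, AlgEquiv.mul_apply, h, map_add, map_one, ih]
    push_cast
    ring
  | pred k ih =>
    rw [zpow_sub_one, AlgEquiv.mul_apply, hinv, map_sub, map_one, ih]
    push_cast
    ring

theorem zpow_apply_of_apply_eq_mul {c : K} (hc : c ≠ 0)
    (h : ψ a = algebraMap K E c * a) (k : ℤ) : (ψ ^ k) a = algebraMap K E (c ^ k) * a := by
  have hinv : ψ⁻¹ a = algebraMap K E c⁻¹ * a := by
    rw [AlgEquiv.aut_inv, AlgEquiv.symm_apply_eq, map_mul, AlgEquiv.commutes, h, ← mul_assoc,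
      ← map_mul, inv_mul_cancel₀ hc, map_one, one_mul]
  induction k using Int.induction_on with
  | zero => simp
  | succ k ih =>
    rw [zpow_add_one, AlgEquiv.mul_apply, h, map_mul, AlgEquiv.commutes, ih, zpow_add_one₀ hc,
      map_mul]
    ring
  | pred k ih =>
    rw [zpow_sub_one, AlgEquiv.mul_apply, hinv, map_mul, AlgEquiv.commutes, ih,
      zpow_sub_one₀ hc, map_mul]
    ring

theorem zpow_apply_of_apply_eq_self (h : ψ a = a) (k : ℤ) : (ψ ^ k) a = a :=
  (MulAction.stabilizer (E ≃ₐ[K] E) a).zpow_mem (show ψ • a = a from h) k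

end AlgEquiv

namespace MixedInvariant

open RatFunc (shift)

variable {K : Type*} [Field K]

/-- `P(x, y) ↦ P(x + r, c y)` on `K(x)[y]`. -/
noncomputable def shiftScale (r c : K) : (RatFunc K)[X] →+* (RatFunc K)[X] :=
  (compRingHom (C (RatFunc.C c) * X)).comp (mapRingHom (shift r).toRingHom)

theorem coeff_shiftScale (r c : K) (P : (RatFunc K)[X]) (i : ℕ) :
    (shiftScale r c P).coeff i = shift r (P.coeff i) * RatFunc.C c ^ i := by
  simp [shiftScale]

theorem natDegree_shiftScale_le (r c : K) (P : (RatFunc K)[X]) :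
    (shiftScale r c P).natDegree ≤ P.natDegree :=
  natDegree_le_iff_coeff_eq_zero.2 fun i hi => by
    rw [coeff_shiftScale, coeff_eq_zero_of_natDegree_lt hi, map_zero, zero_mul]

variable {G : Type*} [FunLike G (RatFunc (RatFunc K)) (RatFunc (RatFunc K))]
  [RingHomClass G (RatFunc (RatFunc K)) (RatFunc (RatFunc K))] {φ : G} {r c : K}

theorem map_algebraMap_eq_shiftScale (hφC : ∀ a, φ (RatFunc.C a) = RatFunc.C (shift r a))
    (hφX : φ RatFunc.X = RatFunc.C (RatFunc.C c) * RatFunc.X) (P : (RatFunc K)[X]) :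
    φ (algebraMap _ (RatFunc (RatFunc K)) P) = algebraMap _ _ (shiftScale r c P) := by
  refine RingHom.congr_fun
    (f := (φ : RatFunc (RatFunc K) →+* RatFunc (RatFunc K)).comp (algebraMap _ _))
    (g := (algebraMap _ _).comp (shiftScale r c)) (ringHom_ext (fun a => ?_) ?_) P
  · simp [shiftScale, hφC]
  · simp [shiftScale, hφX]

theorem shiftScale_num_denom (hφC : ∀ a, φ (RatFunc.C a) = RatFunc.C (shift r a))
    (hφX : φ RatFunc.X = RatFunc.C (RatFunc.C c) * RatFunc.X) {f : RatFunc (RatFunc K)}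
    (hf : φ f = f) :
    shiftScale r c f.num = C (RatFunc.C c ^ f.denom.natDegree) * f.num ∧
      shiftScale r c f.denom = C (RatFunc.C c ^ f.denom.natDegree) * f.denom := by
  obtain ⟨v, hnum, hdenom⟩ := RatFunc.exists_map_num_denom_eq_C_mul
    (map_algebraMap_eq_shiftScale hφC hφX) (natDegree_shiftScale_le r c) hf
  have hv : RatFunc.C c ^ f.denom.natDegree = v := by
    simpa [coeff_shiftScale, f.monic_denom.coeff_natDegree] using
      congrArg (coeff · f.denom.natDegree) hdenom
  exact hv ▸ ⟨hnum, hdenom⟩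

theorem mem_adjoin_X_of_map_eq_self [CharZero K] (hr : r ≠ 0)
    (hφC : ∀ a, φ (RatFunc.C a) = RatFunc.C (shift r a)) (hφX : φ RatFunc.X = RatFunc.X)
    {f : RatFunc (RatFunc K)} (hf : φ f = f) :
    f ∈ IntermediateField.adjoin K {(RatFunc.X : RatFunc (RatFunc K))} := by
  have hlifts : ∀ P : (RatFunc K)[X],
      shiftScale r 1 P = C (RatFunc.C 1 ^ f.denom.natDegree) * P →
      ∃ Q : K[X], Q.map (algebraMap K (RatFunc K)) = P := by
    intro P hP
    refine (mem_lifts P).1 <| (lifts_iff_coeff_lifts P).2 fun i => ?_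
    have hi : shift r (P.coeff i) = P.coeff i := by
      simpa [coeff_shiftScale] using congrArg (coeff · i) hP
    obtain ⟨k, hk⟩ := RatFunc.exists_eq_C_of_shift_eq_self hr hi
    exact ⟨k, by rw [hk, RatFunc.algebraMap_eq_C]⟩
  obtain ⟨hnum, hdenom⟩ := shiftScale_num_denom hφC (c := 1) (by simpa using hφX) hf
  obtain ⟨Q₁, hQ₁⟩ := hlifts _ hnum
  obtain ⟨Q₂, hQ₂⟩ := hlifts _ hdenom
  refine (IntermediateField.mem_adjoin_simple_iff _ _).2 ⟨Q₁, Q₂, ?_⟩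
  rw [← aeval_map_algebraMap (RatFunc K) _ Q₁, ← aeval_map_algebraMap (RatFunc K) _ Q₂, hQ₁, hQ₂,
    RatFunc.aeval_X_left_eq_algebraMap, RatFunc.aeval_X_left_eq_algebraMap, f.num_div_denom]

theorem exists_eq_C_of_map_eq_self (hc : Function.Injective fun i : ℕ => c ^ i)
    (hφC : ∀ a, φ (RatFunc.C a) = RatFunc.C (shift r a))
    (hφX : φ RatFunc.X = RatFunc.C (RatFunc.C c) * RatFunc.X) {f : RatFunc (RatFunc K)}
    (hf : φ f = f) : ∃ a, f = RatFunc.C a ∧ shift r a = a := by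
  set d := f.denom.natDegree
  have hmonomial : ∀ P : (RatFunc K)[X], shiftScale r c P = C (RatFunc.C c ^ d) * P →
      P = monomial d (P.coeff d) := by
    intro P hP
    ext i
    rw [coeff_monomial]
    split_ifs with hid
    · rw [hid]
    · by_contra hi
      have hrel := congrArg (coeff · i) hP
      simp only [coeff_shiftScale, coeff_C_mul, ← map_pow] at hrel
      exact hid (hc (RatFunc.eq_of_shift_mul_C_eq_C_mul hi hrel)).symm
  obtain ⟨hnum, hdenom⟩ := shiftScale_num_denom hφC hφX hf
  obtain ⟨a, ha⟩ : ∃ a, f.num = monomial d a := ⟨_, hmonomial _ hnum⟩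
  have hdenom' : f.denom = monomial d 1 := by
    rw [hmonomial _ hdenom, f.monic_denom.coeff_natDegree]
  have hfa : f = RatFunc.C a := by
    rw [← f.num_div_denom, ha, hdenom', RatFunc.algebraMap_monomial, RatFunc.algebraMap_monomial,
      map_one, one_mul, mul_div_cancel_right₀ _ (pow_ne_zero _ RatFunc.X_ne_zero)]
  exact ⟨a, hfa, RatFunc.C.injective (by rw [← hφC, ← hfa, hf])⟩

theorem algebraMap_eq_C_C (k : K) :
    algebraMap K (RatFunc (RatFunc K)) k = RatFunc.C (RatFunc.C k) := by
  rw [IsScalarTower.algebraMap_apply K (RatFunc K), RatFunc.algebraMap_eq_C,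
    RatFunc.algebraMap_eq_C]

theorem injective_pow_zpow {q : K} (hq0 : q ≠ 0) (hq : ∀ k : ℤ, k ≠ 0 → q ^ k ≠ 1) {n : ℤ}
    (hn : n ≠ 0) : Function.Injective fun i : ℕ => (q ^ n) ^ i := by
  intro i j hij
  by_contra hne
  refine hq (n * (i - j)) (mul_ne_zero hn (sub_ne_zero.2 (Nat.cast_injective.ne hne))) ?_
  rw [zpow_mul, zpow_sub₀ (zpow_ne_zero n hq0), zpow_natCast, zpow_natCast]
  exact (div_eq_one_iff_eq (pow_ne_zero _ (zpow_ne_zero n hq0))).2 hij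

theorem zpow_mul_zpow_apply {q : K} (hq0 : q ≠ 0)
    {σ τ : RatFunc (RatFunc K) ≃ₐ[K] RatFunc (RatFunc K)}
    (hσ : σ (algebraMap (RatFunc K) _ RatFunc.X) = algebraMap (RatFunc K) _ RatFunc.X + 1 ∧
      σ RatFunc.X = RatFunc.X)
    (hτ : τ (algebraMap (RatFunc K) _ RatFunc.X) = algebraMap (RatFunc K) _ RatFunc.X ∧
      τ RatFunc.X = algebraMap K _ q * RatFunc.X) (m n : ℤ) :
    (∀ a, (σ ^ m * τ ^ n) (RatFunc.C a) = RatFunc.C (shift (m : K) a)) ∧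
      (σ ^ m * τ ^ n) RatFunc.X = RatFunc.C (RatFunc.C (q ^ n)) * RatFunc.X := by
  simp only [RatFunc.algebraMap_eq_C] at hσ hτ
  set ι := IsScalarTower.toAlgHom K (RatFunc K) (RatFunc (RatFunc K))
  have hι : ((σ ^ m * τ ^ n : _ ≃ₐ[K] _) : _ →ₐ[K] _).comp ι = ι.comp (shift m) := by
    refine RatFunc.algHom_ext_of_apply_X ?_
    simp [ι, RatFunc.shift_X, AlgEquiv.zpow_apply_of_apply_eq_self hτ.1,
      AlgEquiv.zpow_apply_of_apply_eq_add_one hσ.1]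
  refine ⟨fun a => by simpa [ι, RatFunc.algebraMap_eq_C] using AlgHom.congr_fun hι a, ?_⟩
  rw [AlgEquiv.mul_apply, AlgEquiv.zpow_apply_of_apply_eq_mul hq0 hτ.2, map_mul,
    AlgEquiv.commutes, AlgEquiv.zpow_apply_of_apply_eq_self hσ.2, algebraMap_eq_C_C]

end MixedInvariant

open MixedInvariant in
/-- Mixed shift/`q`-shift invariant rational functions: if `q` is not a root of unity and
`σ_x^m τ_y^n(f) = f` with `m, n` not both zero, then `f ∈ K(x)` if `m = 0`,
`f ∈ K(y)` if `n = 0`, and `f ∈ K` if `mn ≠ 0`. -/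
theorem mixed_invariant_structure (K : Type) [Field K] [CharZero K] (q : K)
    (hq : ∀ k : ℤ, k ≠ 0 → q ^ k ≠ 1)
    (x y : RatFunc (RatFunc K))
    (hx : x = algebraMap (RatFunc K) (RatFunc (RatFunc K)) RatFunc.X) (hy : y = RatFunc.X)
    (σx τy : RatFunc (RatFunc K) ≃ₐ[K] RatFunc (RatFunc K))
    (hσx : σx x = x + 1 ∧ σx y = y)
    (hτy : τy x = x ∧ τy y = algebraMap K (RatFunc (RatFunc K)) q * y)
    (m n : ℤ) (hmn : ¬(m = 0 ∧ n = 0))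
    (f : RatFunc (RatFunc K)) (hf : (σx ^ m) ((τy ^ n) f) = f) :
    (m = 0 → f ∈ IntermediateField.adjoin K {x}) ∧
    (n = 0 → f ∈ IntermediateField.adjoin K {y}) ∧
    (m ≠ 0 → n ≠ 0 → ∃ c : K, f = algebraMap K (RatFunc (RatFunc K)) c) := by
  subst hx hy
  have hq0 : q ≠ 0 := by
    rintro rfl
    exact RatFunc.X_ne_zero (τy.injective (by rw [hτy.2, map_zero, zero_mul, map_zero]))
  obtain ⟨hφC, hφX⟩ := zpow_mul_zpow_apply hq0 hσx hτy m n
  replace hf : (σx ^ m * τy ^ n) f = f := hf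
  rcases eq_or_ne n 0 with rfl | hn
  · have hm : (m : K) ≠ 0 := Int.cast_ne_zero.2 fun hm => hmn ⟨hm, rfl⟩
    exact ⟨fun hm' => (hmn ⟨hm', rfl⟩).elim,
      fun _ => mem_adjoin_X_of_map_eq_self hm hφC (by simpa using hφX) hf,
      fun _ h => (h rfl).elim⟩
  · obtain ⟨a, rfl, ha⟩ := exists_eq_C_of_map_eq_self (injective_pow_zpow hq0 hq hn) hφC hφX hf
    refine ⟨fun _ => ?_, fun h => (hn h).elim, fun hm _ => ?_⟩
    · rw [← RatFunc.algebraMap_eq_C]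
      exact RatFunc.algHom_apply_mem_adjoin (IsScalarTower.toAlgHom K (RatFunc K) _) a
    · obtain ⟨k, rfl⟩ := RatFunc.exists_eq_C_of_shift_eq_self (Int.cast_ne_zero.2 hm) ha
      exact ⟨k, (algebraMap_eq_C_C k).symm⟩
end

section
/- Let F be a field of characteristic zero, σ the shift z ↦ z+1 on F(z), and let f = a/b + a'/σ^k(b) where b ∈ F[z] is irreducible monic, k a positive integer, a, a' ∈ F[z] with deg(a), deg(a') < deg(b). Then f is σ-summable in F(z) (i.e., f = σ(g) - g for some g ∈ F(z)) if and only if σ^{-k}(a') + a = 0. -/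
/-!
Since `σ^k h - h = σ g - g` with `g = ∑_{i<k} σ^i h`, the function `f` is summable iff
`(a + σ^{-k} a') / b` is. A fraction `r / b` with `r ≠ 0` and `deg r < deg b` is never summable:
if `r / b = σ g - g`, then `σ^n g - g = ∑_{i<n} σ^i (r / b)`. In characteristic zero the shifts
`b(z + i)` of the irreducible `b` are pairwise coprime, so this sum has a denominator of degree at
least `n`, whereas the denominator of `σ^n g - g` divides `denom(g)(z + n) · denom(g)`. Taking
`n > 2 deg(denom g)` gives a contradiction.
-/

open Polynomial Function

section Shift

variable {F : Type*} [Field F] {σ : RatFunc F ≃ₐ[F] RatFunc F}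

theorem zpow_apply_X (hσ : σ RatFunc.X = RatFunc.X + 1) (m : ℤ) :
    (σ ^ m) RatFunc.X = RatFunc.X + (m : RatFunc F) := by
  induction m using Int.induction_on with
  | zero => simp
  | succ m ih =>
    rw [zpow_add_one, AlgEquiv.mul_apply, hσ, map_add, ih, map_one]
    push_cast; ring
  | pred m ih =>
    have hinv : σ⁻¹ RatFunc.X = RatFunc.X - 1 := by
      rw [AlgEquiv.aut_inv, AlgEquiv.symm_apply_eq, map_sub, hσ, map_one]; ring
    rw [zpow_sub_one, AlgEquiv.mul_apply, hinv, map_sub, ih, map_one]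
    push_cast; ring

theorem zpow_apply_algebraMap (hσ : σ RatFunc.X = RatFunc.X + 1) (m : ℤ) (p : F[X]) :
    (σ ^ m) (algebraMap F[X] (RatFunc F) p) = algebraMap F[X] (RatFunc F) (taylor (m : F) p) := by
  have h : (σ ^ m).toAlgHom.comp (IsScalarTower.toAlgHom F F[X] (RatFunc F)) =
      (IsScalarTower.toAlgHom F F[X] (RatFunc F)).comp (taylorAlgHom (m : F)) := by
    apply Polynomial.algHom_ext
    simp [zpow_apply_X hσ, RatFunc.algebraMap_X]
  exact DFunLike.congr_fun h p

theorem pow_apply_algebraMap (hσ : σ RatFunc.X = RatFunc.X + 1) (n : ℕ) (p : F[X]) :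
    (σ ^ n) (algebraMap F[X] (RatFunc F) p) = algebraMap F[X] (RatFunc F) (taylor (n : F) p) := by
  simpa using zpow_apply_algebraMap hσ n p

end Shift

section Taylor

variable {F : Type*} [Field F] [CharZero F]

theorem natDegree_eq_zero_of_taylor_eq_self {p : F[X]} {c : F} (hc : c ≠ 0)
    (h : taylor c p = p) : p.natDegree = 0 := by
  have hperiodic : ∀ m : ℕ, p.eval (m * c) = p.eval 0 := by
    intro m
    induction m with
    | zero => simp
    | succ m ih =>
      rw [← ih]
      conv_rhs => rw [← h]
      rw [taylor_eval]; push_cast; ring_nf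
  have hroots : {x | (p - C (p.eval 0)).IsRoot x}.Infinite := by
    refine Set.infinite_of_injective_forall_mem (f := fun m : ℕ => (m : F) * c) ?_ ?_
    · intro m n hmn
      exact_mod_cast mul_right_cancel₀ hc hmn
    · intro m
      simp [hperiodic]
  rw [sub_eq_zero.mp (eq_zero_of_infinite_isRoot _ hroots), natDegree_C]

theorem isCoprime_taylor_self {b : F[X]} (hb : Irreducible b) (hmon : b.Monic) {c : F}
    (hc : c ≠ 0) : IsCoprime b (taylor c b) := by
  rw [hb.coprime_iff_not_dvd]
  intro hdvd
  have hshift : taylor c b = b :=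
    eq_of_monic_of_dvd_of_natDegree_le hmon (hmon.comp_X_add_C c) hdvd
      (natDegree_taylor b c).le
  exact hb.natDegree_pos.ne' (natDegree_eq_zero_of_taylor_eq_self hc hshift)

theorem pairwise_isCoprime_taylor_natCast {b : F[X]} (hb : Irreducible b) (hmon : b.Monic) :
    Pairwise (IsCoprime on (fun i : ℕ => taylor (i : F) b)) := by
  intro i j hij
  have h := (isCoprime_taylor_self hb hmon (c := (j : F) - i)
    (sub_ne_zero.mpr (by exact_mod_cast hij.symm))).map (taylorAlgHom (i : F) : F[X] →+* F[X])
  simpa only [onFun, RingHom.coe_coe, taylorAlgHom_apply, taylor_taylor, add_sub_cancel] using h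

end Taylor

namespace RatFunc

variable {K : Type*} [Field K]

theorem denom_sub_dvd (x y : RatFunc K) : denom (x - y) ∣ denom x * denom y := by
  rw [sub_eq_add_neg]
  refine (denom_add_dvd x (-y)).trans (mul_dvd_mul_left _ ?_)
  rw [denom_dvd y.denom_ne_zero]
  exact ⟨-y.num, by rw [map_neg, neg_div, num_div_denom]⟩

theorem dvd_denom_add_of_isCoprime {p : K[X]} {x z : RatFunc K} (hx : p ∣ denom x)
    (hz : IsCoprime p (denom z)) : p ∣ denom (x + z) := by
  have h : p ∣ denom (x + z) * denom z :=
    hx.trans (by simpa using denom_sub_dvd (x + z) z)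
  exact hz.dvd_of_dvd_mul_right h

theorem dvd_denom_div_of_isCoprime {p r : K[X]} (hp : p ≠ 0) (hpr : IsCoprime p r) :
    p ∣ denom (algebraMap K[X] (RatFunc K) r / algebraMap K[X] (RatFunc K) p) := by
  set x := algebraMap K[X] (RatFunc K) r / algebraMap K[X] (RatFunc K) p
  have hcross : x.num * p = r * x.denom := by
    apply algebraMap_injective K
    rw [map_mul, map_mul, ← div_eq_div_iff (algebraMap_ne_zero x.denom_ne_zero)
      (algebraMap_ne_zero hp), num_div_denom]
  exact hpr.dvd_of_dvd_mul_left ⟨x.num, by rw [← hcross, mul_comm]⟩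

theorem denom_sum_dvd_prod {ι : Type*} (s : Finset ι) (x : ι → RatFunc K) :
    denom (∑ i ∈ s, x i) ∣ ∏ i ∈ s, denom (x i) := by
  induction s using Finset.cons_induction with
  | empty => simp
  | cons a s ha ih =>
    rw [Finset.sum_cons, Finset.prod_cons]
    exact (denom_add_dvd _ _).trans (mul_dvd_mul_left _ ih)

theorem prod_dvd_denom_sum_div {ι : Type*} {s : Finset ι} {P r : ι → K[X]}
    (hP : ∀ i ∈ s, P i ≠ 0) (hcop : (s : Set ι).Pairwise (IsCoprime on P))
    (hr : ∀ i ∈ s, IsCoprime (P i) (r i)) :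
    ∏ i ∈ s, P i ∣
      denom (∑ i ∈ s, algebraMap K[X] (RatFunc K) (r i) / algebraMap K[X] (RatFunc K) (P i)) := by
  classical
  refine Finset.prod_dvd_of_coprime hcop fun j hj => ?_
  rw [← Finset.add_sum_erase s _ hj]
  refine dvd_denom_add_of_isCoprime (dvd_denom_div_of_isCoprime (hP j hj) (hr j hj)) ?_
  refine IsCoprime.of_isCoprime_of_dvd_right ?_ (denom_sum_dvd_prod _ _)
  refine IsCoprime.prod_right fun i hi => ?_
  exact (hcop hj (Finset.mem_of_mem_erase hi) (Finset.ne_of_mem_erase hi).symm)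
    |>.of_isCoprime_of_dvd_right (denom_div_dvd _ _)

end RatFunc

section Telescoping

variable {R A : Type*} [CommSemiring R] [Ring A] [Algebra R A] (σ : A ≃ₐ[R] A)

theorem pow_apply_sub_self_eq_sum (g : A) (n : ℕ) :
    (σ ^ n) g - g = ∑ i ∈ Finset.range n, (σ ^ i) (σ g - g) := by
  have htelescope := Finset.sum_range_sub (fun i => (σ ^ i) g) n
  rw [pow_zero, AlgEquiv.one_apply] at htelescope
  rw [← htelescope]
  refine Finset.sum_congr rfl fun i _ => ?_
  rw [map_sub, pow_succ, AlgEquiv.mul_apply]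

theorem exists_pow_apply_sub_self_eq (h : A) (n : ℕ) : ∃ g, (σ ^ n) h - h = σ g - g := by
  refine ⟨∑ i ∈ Finset.range n, (σ ^ i) h, ?_⟩
  rw [pow_apply_sub_self_eq_sum, map_sum, ← Finset.sum_sub_distrib]
  refine Finset.sum_congr rfl fun i _ => ?_
  rw [map_sub]
  exact congrArg (· - _) (DFunLike.congr_fun (pow_mul_comm' σ i) h)

theorem exists_add_eq_apply_sub_self_iff {f h : A} (hh : ∃ g, h = σ g - g) :
    (∃ g, f + h = σ g - g) ↔ ∃ g, f = σ g - g := by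
  obtain ⟨g₀, rfl⟩ := hh
  constructor
  · rintro ⟨g, hg⟩
    exact ⟨g - g₀, by rw [map_sub, eq_sub_of_add_eq hg]; abel⟩
  · rintro ⟨g, rfl⟩
    exact ⟨g + g₀, by rw [map_add]; abel⟩

end Telescoping

section Summability

variable {F : Type*} [Field F] {σ : RatFunc F ≃ₐ[F] RatFunc F}

theorem natDegree_denom_pow_apply_sub_self_le (hσ : σ RatFunc.X = RatFunc.X + 1) (n : ℕ)
    (g : RatFunc F) : ((σ ^ n) g - g).denom.natDegree ≤ 2 * g.denom.natDegree := by
  have hshift : ((σ ^ n) g).denom ∣ taylor (n : F) g.denom := by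
    conv_lhs => rw [← g.num_div_denom]
    rw [map_div₀, pow_apply_algebraMap hσ, pow_apply_algebraMap hσ]
    exact RatFunc.denom_div_dvd _ _
  have hne : taylor (n : F) g.denom * g.denom ≠ 0 :=
    mul_ne_zero ((taylor_eq_zero _ _).not.mpr g.denom_ne_zero) g.denom_ne_zero
  calc ((σ ^ n) g - g).denom.natDegree ≤ (taylor (n : F) g.denom * g.denom).natDegree :=
        natDegree_le_of_dvd ((RatFunc.denom_sub_dvd _ _).trans (mul_dvd_mul_right hshift _)) hne
    _ = 2 * g.denom.natDegree := by
        rw [natDegree_mul (left_ne_zero_of_mul hne) g.denom_ne_zero, natDegree_taylor]; ring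

variable [CharZero F]

theorem not_exists_div_eq_apply_sub_self (hσ : σ RatFunc.X = RatFunc.X + 1) {b r : F[X]}
    (hb : Irreducible b) (hmon : b.Monic) (hr : r ≠ 0) (hrb : r.degree < b.degree) :
    ¬ ∃ g, algebraMap F[X] (RatFunc F) r / algebraMap F[X] (RatFunc F) b = σ g - g := by
  rintro ⟨g, hg⟩
  set n := 2 * g.denom.natDegree + 1
  have hsum : (σ ^ n) g - g = ∑ i ∈ Finset.range n,
      algebraMap F[X] (RatFunc F) (taylor (i : F) r) /
        algebraMap F[X] (RatFunc F) (taylor (i : F) b) := by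
    simp only [pow_apply_sub_self_eq_sum, ← hg, map_div₀, pow_apply_algebraMap hσ]
  have hbr : IsCoprime b r :=
    hb.coprime_iff_not_dvd.mpr fun h => (degree_le_of_dvd h hr).not_gt hrb
  have hdvd : ∏ i ∈ Finset.range n, taylor (i : F) b ∣ ((σ ^ n) g - g).denom := by
    rw [hsum]
    exact RatFunc.prod_dvd_denom_sum_div (fun i _ => (taylor_eq_zero _ _).not.mpr hmon.ne_zero)
      ((pairwise_isCoprime_taylor_natCast hb hmon).set_pairwise _)
      (fun i _ => hbr.map (taylorAlgHom (i : F) : F[X] →+* F[X]))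
  have hdeg : (∏ i ∈ Finset.range n, taylor (i : F) b).natDegree = n * b.natDegree := by
    rw [natDegree_prod _ _ fun i _ => (taylor_eq_zero _ _).not.mpr hmon.ne_zero]
    simp [natDegree_taylor]
  have hlower := hdeg ▸ natDegree_le_of_dvd hdvd (RatFunc.denom_ne_zero _)
  have hupper := natDegree_denom_pow_apply_sub_self_le hσ n g
  have := Nat.le_mul_of_pos_right n hb.natDegree_pos
  omega

theorem exists_div_eq_apply_sub_self_iff (hσ : σ RatFunc.X = RatFunc.X + 1) {b r : F[X]}
    (hb : Irreducible b) (hmon : b.Monic) (hrb : r.degree < b.degree) :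
    (∃ g, algebraMap F[X] (RatFunc F) r / algebraMap F[X] (RatFunc F) b = σ g - g) ↔ r = 0 := by
  refine ⟨fun h => by_contra fun hr => not_exists_div_eq_apply_sub_self hσ hb hmon hr hrb h, ?_⟩
  rintro rfl
  exact ⟨0, by simp⟩

end Summability

theorem shift_summability_two_fractions_general (F : Type) [Field F] [CharZero F]
    (σ : RatFunc F ≃ₐ[F] RatFunc F) (hσ : σ RatFunc.X = RatFunc.X + 1)
    (b : Polynomial F) (hbirr : Irreducible b) (hbmon : b.Monic)
    (k : ℕ)
    (a a' : Polynomial F) (ha : a.degree < b.degree) (ha' : a'.degree < b.degree)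
    (f : RatFunc F)
    (hf : f = algebraMap (Polynomial F) (RatFunc F) a /
              algebraMap (Polynomial F) (RatFunc F) b +
          algebraMap (Polynomial F) (RatFunc F) a' /
              (σ ^ (k : ℤ)) (algebraMap (Polynomial F) (RatFunc F) b)) :
    (∃ g : RatFunc F, f = σ g - g) ↔
      (σ ^ (-(k : ℤ))) (algebraMap (Polynomial F) (RatFunc F) a') +
        algebraMap (Polynomial F) (RatFunc F) a = 0 := by
  set a'' := taylor (-(k : F)) a'
  set h := algebraMap F[X] (RatFunc F) a'' / algebraMap F[X] (RatFunc F) b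
  have hback : (σ ^ (-(k : ℤ))) (algebraMap F[X] (RatFunc F) a') =
      algebraMap F[X] (RatFunc F) a'' := by
    rw [zpow_apply_algebraMap hσ, Int.cast_neg, Int.cast_natCast]
  have hsplit : f = algebraMap F[X] (RatFunc F) (a + a'') / algebraMap F[X] (RatFunc F) b +
      ((σ ^ k) h - h) := by
    rw [hf, map_div₀, pow_apply_algebraMap hσ, pow_apply_algebraMap hσ, zpow_natCast,
      pow_apply_algebraMap hσ, taylor_taylor, add_neg_cancel, taylor_zero, map_add, add_div]
    ring
  have hdeg : (a + a'').degree < b.degree :=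
    (degree_add_le a a'').trans_lt (max_lt ha (by rwa [degree_taylor]))
  rw [hsplit, exists_add_eq_apply_sub_self_iff σ (exists_pow_apply_sub_self_eq σ h k),
    exists_div_eq_apply_sub_self_iff hσ hbirr hbmon hdeg, hback, ← map_add,
    map_eq_zero_iff _ (RatFunc.algebraMap_injective F), add_comm]

/-- Residue criterion for a sum of two simple fractions in the same shift orbit:
with `b` irreducible monic, `k > 0`, `deg a, deg a' < deg b`, the rational function
`f = a/b + a'/σ^k(b)` is `σ`-summable in `F(z)` iff `σ^{-k}(a') + a = 0`. -/
theorem shift_summability_two_fractions (F : Type) [Field F] [CharZero F]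
    (σ : RatFunc F ≃ₐ[F] RatFunc F) (hσ : σ RatFunc.X = RatFunc.X + 1)
    (b : Polynomial F) (hbirr : Irreducible b) (hbmon : b.Monic)
    (k : ℕ) (hk : 0 < k)
    (a a' : Polynomial F) (ha : a.degree < b.degree) (ha' : a'.degree < b.degree)
    (f : RatFunc F)
    (hf : f = algebraMap (Polynomial F) (RatFunc F) a /
              algebraMap (Polynomial F) (RatFunc F) b +
          algebraMap (Polynomial F) (RatFunc F) a' /
              (σ ^ (k : ℤ)) (algebraMap (Polynomial F) (RatFunc F) b)) :
    (∃ g : RatFunc F, f = σ g - g) ↔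
      (σ ^ (-(k : ℤ))) (algebraMap (Polynomial F) (RatFunc F) a') +
        algebraMap (Polynomial F) (RatFunc F) a = 0 :=
  shift_summability_two_fractions_general F σ hσ b hbirr hbmon k a a' ha ha' f hf
end
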